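/- Let n ≥ 3 and consider the building-block graph B_n with nodes a_1,…,a_n and b_1,…,b_{n-1}, where for each i ∈ {1,…,n−1} there is an edge (a_i, a_{i+1}) with delay 1 and edges (a_i, b_i), (b_i, a_{i+1}) with delay 0, and all edges have capacity 1. Then the minimum, over all feasible (fractional) flows of rate R = (n−1)/(n−2) from a_1 to a_n, of the maximum delay D(f) equals 1. In particular, since R > 1 and the unique zero-delay a_1–a_n path carries at most unit rate, any feasible flow of rate R must have a flow-carrying path of delay at least 1. -/

import Mathlib

/-- A directed network: each edge has a source node, a destination node,
a non-negative integer capacity and a non-negative integer delay. -/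
structure Network (V : Type) (E : Type) where
  src : E → V
  dst : E → V
  cap : E → ℕ
  delay : E → ℕ

namespace Network

variable {V E : Type}

/-- `N.IsPath s t p` : the list of edges `p` forms a directed path from `s` to `t`. -/
def IsPath (N : Network V E) : V → V → List E → Prop
  | s, t, [] => s = t
  | s, t, e :: es => N.src e = s ∧ N.IsPath (N.dst e) t es

/-- The delay of a path: the sum of the delays of its edges. -/
def pathDelay (N : Network V E) (p : List E) : ℕ := (p.map N.delay).sum

end Network

/-- A (path-based) flow from `s` to `t`: a finitely-supported assignment of
non-negative rates to `s`–`t` paths. -/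
structure PathFlow {V E : Type} (N : Network V E) (s t : V) where
  f : List E →₀ ℝ
  nonneg : ∀ p, 0 ≤ f p
  isPath : ∀ p ∈ f.support, N.IsPath s t p

namespace PathFlow

variable {V E : Type} [DecidableEq E] {N : Network V E} {s t : V}

/-- Total rate of the flow. -/
noncomputable def totalRate (F : PathFlow N s t) : ℝ := ∑ p ∈ F.f.support, F.f p

/-- Rate carried by edge `e`: the sum of the rates of all paths containing `e`. -/
noncomputable def edgeRate (F : PathFlow N s t) (e : E) : ℝ :=
  ∑ p ∈ F.f.support, if e ∈ p then F.f p else 0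

/-- Feasibility with rate `R`: total rate is `R` and every edge capacity is respected. -/
def Feasible (F : PathFlow N s t) (R : ℝ) : Prop :=
  F.totalRate = R ∧ ∀ e, F.edgeRate e ≤ (N.cap e : ℝ)

/-- The maximum delay over flow-carrying paths. -/
def maxDelay (F : PathFlow N s t) : ℕ := F.f.support.sup N.pathDelay

/-- An integer flow assigns a non-negative integer rate to every path. -/
def IsInteger (F : PathFlow N s t) : Prop := ∀ p, ∃ m : ℕ, F.f p = (m : ℝ)

end PathFlow
/-- Nodes of the partition-reduction graph `G'`: `Sum.inl i` is `w_i` (`i = 0,…,n`),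
`Sum.inr i` is `v_{i+1}` (`i = 0,…,n-1`). -/
abbrev GV (n : ℕ) := Fin (n + 1) ⊕ Fin n

/-- Edges of `G'`: `Sum.inl i` is the direct edge `(w_i, w_{i+1})` of delay `a i`;
`Sum.inr (Sum.inl i)` is `(w_i, v_{i+1})` and `Sum.inr (Sum.inr i)` is `(v_{i+1}, w_{i+1})`,
both of delay `0`. All edges have capacity `1`. -/
abbrev GE (n : ℕ) := Fin n ⊕ (Fin n ⊕ Fin n)

/-- The graph `G'` reduced from the partition problem. -/
def Gpart (n : ℕ) (a : Fin n → ℕ) : Network (GV n) (GE n) where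
  src
    | Sum.inl i => Sum.inl i.castSucc
    | Sum.inr (Sum.inl i) => Sum.inl i.castSucc
    | Sum.inr (Sum.inr i) => Sum.inr i
  dst
    | Sum.inl i => Sum.inl i.succ
    | Sum.inr (Sum.inl i) => Sum.inr i
    | Sum.inr (Sum.inr i) => Sum.inl i.succ
  cap := fun _ => 1
  delay
    | Sum.inl i => a i
    | Sum.inr _ => 0

/-- The building-block graph `B_n` of Fig. 3: spine nodes `a_1,…,a_n`
(`Sum.inl i` = `a_{i+1}`) and detour nodes `b_1,…,b_{n-1}` (`Sum.inr i` = `b_{i+1}`);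
for each of the `n - 1` layers there is a direct edge `(a_i, a_{i+1})` of delay `1` and
a zero-delay two-edge route `(a_i, b_i), (b_i, a_{i+1})`; all edges have capacity `1`. -/
abbrev Bblock (n : ℕ) : Network (GV (n - 1)) (GE (n - 1)) :=
  Gpart (n - 1) (fun _ => 1)

/-- The source `a_1` of `B_n`. -/
abbrev BblockSrc (n : ℕ) : GV (n - 1) := Sum.inl 0

/-- The sink `a_n` of `B_n`. -/
abbrev BblockSink (n : ℕ) : GV (n - 1) := Sum.inl (Fin.last (n - 1))

/-! Every zero-delay path from `a_1` to `a_n` starts with the detour edge `(a_1, b_1)`, so a flow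
carried by zero-delay paths alone has rate at most `1 < R`. Conversely, with `m = n - 1` layers, let
`p_i` take the direct edge in layer `i` and the detour in every other layer. Rate `1/(m-1)` on each
`p_i` gives total rate `m/(m-1) = R`; direct edges then carry `1/(m-1)`, detour edges
`(m-1)/(m-1) = 1`, and every `p_i` has delay `1`. -/

namespace Network

variable {V E : Type} (N : Network V E)

theorem IsPath.append {s u t : V} {p q : List E} (hp : N.IsPath s u p) (hq : N.IsPath u t q) :
    N.IsPath s t (p ++ q) := by
  induction p generalizing s with
  | nil => cases hp; exact hq
  | cons e es ih => exact ⟨hp.1, ih hp.2⟩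

theorem isPath_flatMap_finRange {m : ℕ} (w : Fin (m + 1) → V) (L : Fin m → List E)
    (hL : ∀ j, N.IsPath (w j.castSucc) (w j.succ) (L j)) :
    N.IsPath (w 0) (w (Fin.last m)) ((List.finRange m).flatMap L) := by
  induction m with
  | zero => rfl
  | succ m ih =>
    rw [List.finRange_succ_last, List.flatMap_append, List.flatMap_map, List.flatMap_singleton]
    exact IsPath.append N (ih (w ∘ Fin.castSucc) (L ∘ Fin.castSucc) fun j => hL j.castSucc)
      (hL (Fin.last m))

theorem pathDelay_append (p q : List E) : N.pathDelay (p ++ q) = N.pathDelay p + N.pathDelay q := by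
  simp [pathDelay]

theorem pathDelay_flatMap {α : Type} (L : α → List E) (l : List α) :
    N.pathDelay (l.flatMap L) = (l.map fun x => N.pathDelay (L x)).sum := by
  induction l with
  | nil => rfl
  | cons x l ih => rw [List.flatMap_cons, pathDelay_append, ih, List.map_cons, List.sum_cons]

end Network

namespace PathFlow

variable {V E : Type} {N : Network V E} {s t : V}

theorem totalRate_eq_sum_of_support_subset (F : PathFlow N s t) {S : Finset (List E)}
    (hS : F.f.support ⊆ S) : F.totalRate = ∑ p ∈ S, F.f p :=
  Finset.sum_subset hS fun _ _ hp => Finsupp.notMem_support_iff.1 hp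

variable [DecidableEq E]

theorem edgeRate_eq_sum_of_support_subset (F : PathFlow N s t) {S : Finset (List E)}
    (hS : F.f.support ⊆ S) (e : E) : F.edgeRate e = ∑ p ∈ S, if e ∈ p then F.f p else 0 :=
  Finset.sum_subset hS fun _ _ hp => by rw [Finsupp.notMem_support_iff.1 hp, ite_self]

theorem edgeRate_eq_totalRate_of_forall_mem (F : PathFlow N s t) {e : E}
    (he : ∀ p ∈ F.f.support, e ∈ p) : F.edgeRate e = F.totalRate :=
  Finset.sum_congr rfl fun p hp => if_pos (he p hp)

section Uniform

variable {ι : Type} [Fintype ι] (P : ι → List E) (hP : ∀ i, N.IsPath s t (P i)) {c : ℝ}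
  (hc : 0 ≤ c)

noncomputable def uniform : PathFlow N s t where
  f := Finsupp.indicator (Finset.univ.image P) fun _ _ => c
  nonneg p := by
    rw [Finsupp.indicator_apply]
    split_ifs
    exacts [hc, le_rfl]
  isPath p hp := by
    obtain ⟨i, -, rfl⟩ := Finset.mem_image.1 (Finsupp.support_indicator_subset _ _ hp)
    exact hP i

theorem uniform_apply (i : ι) : (uniform P hP hc).f (P i) = c := by
  simp [uniform, Finsupp.indicator_apply]

theorem support_uniform_subset : (uniform P hP hc).f.support ⊆ Finset.univ.image P :=
  Finsupp.support_indicator_subset _ _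

theorem support_uniform (hc' : 0 < c) : (uniform P hP hc).f.support = Finset.univ.image P := by
  refine (support_uniform_subset P hP hc).antisymm fun p hp => ?_
  obtain ⟨i, -, rfl⟩ := Finset.mem_image.1 hp
  rw [Finsupp.mem_support_iff, uniform_apply]
  exact hc'.ne'

variable {P}

theorem totalRate_uniform (hPi : P.Injective) :
    (uniform P hP hc).totalRate = Fintype.card ι * c := by
  rw [totalRate_eq_sum_of_support_subset _ (support_uniform_subset P hP hc),
    Finset.sum_image fun i _ j _ h => hPi h]
  simp [uniform_apply]

theorem edgeRate_uniform (hPi : P.Injective) (e : E) :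
    (uniform P hP hc).edgeRate e = Nat.card {i // e ∈ P i} * c := by
  rw [edgeRate_eq_sum_of_support_subset _ (support_uniform_subset P hP hc),
    Finset.sum_image fun i _ j _ h => hPi h]
  simp [uniform_apply, Finset.sum_ite, Fintype.card_subtype]

theorem maxDelay_uniform (hc' : 0 < c) :
    (uniform P hP hc).maxDelay = Finset.univ.sup fun i => N.pathDelay (P i) := by
  rw [maxDelay, support_uniform P hP hc hc', Finset.sup_image]
  rfl

end Uniform

end PathFlow

namespace Gpart

variable {m : ℕ} (a : Fin m → ℕ)

def layer (i j : Fin m) : List (GE m) :=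
  if j = i then [Sum.inl j] else [Sum.inr (Sum.inl j), Sum.inr (Sum.inr j)]

def pathVia (i : Fin m) : List (GE m) := (List.finRange m).flatMap (layer i)

theorem isPath_pathVia (i : Fin m) :
    (Gpart m a).IsPath (Sum.inl 0) (Sum.inl (Fin.last m)) (pathVia i) :=
  Network.isPath_flatMap_finRange _ (fun j => Sum.inl j) (layer i) fun j => by
    unfold layer
    split_ifs <;> simp [Network.IsPath, Gpart]

theorem pathDelay_pathVia (i : Fin m) : (Gpart m a).pathDelay (pathVia i) = a i := by
  rw [pathVia, Network.pathDelay_flatMap, ← Fin.sum_univ_def]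
  simp [layer, apply_ite, Network.pathDelay, Gpart]

theorem mem_layer {i j : Fin m} {e : GE m} : e ∈ layer i j ↔
    j = i ∧ e = Sum.inl j ∨ j ≠ i ∧ (e = Sum.inr (Sum.inl j) ∨ e = Sum.inr (Sum.inr j)) := by
  unfold layer
  split_ifs <;> simp [*]

theorem mem_pathVia {e : GE m} {i : Fin m} : e ∈ pathVia i ↔ ∃ j, e ∈ layer i j := by
  simp [pathVia]

theorem inl_mem_pathVia {i k : Fin m} : Sum.inl k ∈ pathVia i ↔ k = i := by
  simp [mem_pathVia, mem_layer]

theorem inr_inl_mem_pathVia {i k : Fin m} : Sum.inr (Sum.inl k) ∈ pathVia i ↔ k ≠ i := by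
  simp [mem_pathVia, mem_layer]

theorem inr_inr_mem_pathVia {i k : Fin m} : Sum.inr (Sum.inr k) ∈ pathVia i ↔ k ≠ i := by
  simp [mem_pathVia, mem_layer]

theorem pathVia_injective : Function.Injective (pathVia (m := m)) := fun _ _ hij =>
  inl_mem_pathVia.1 (hij ▸ inl_mem_pathVia.2 rfl)

theorem card_mem_pathVia_le (hm : 2 ≤ m) (e : GE m) : Nat.card {i // e ∈ pathVia i} ≤ m - 1 := by
  rcases e with k | ⟨k | k⟩
  · simp only [inl_mem_pathVia, Nat.card_unique]
    omega
  · simp [inr_inl_mem_pathVia]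
  · simp [inr_inr_mem_pathVia]

theorem exists_feasible_maxDelay_eq_sup (hm : 2 ≤ m) :
    ∃ F : PathFlow (Gpart m a) (Sum.inl 0) (Sum.inl (Fin.last m)),
      F.Feasible ((m : ℝ) / ((m : ℝ) - 1)) ∧ F.maxDelay = Finset.univ.sup a := by
  have hm' : (1 : ℝ) < m := by exact_mod_cast hm
  have hc : 0 < ((m : ℝ) - 1)⁻¹ := inv_pos.2 (by linarith)
  refine ⟨PathFlow.uniform pathVia (isPath_pathVia a) hc.le, ⟨?_, fun e => ?_⟩, ?_⟩
  · rw [PathFlow.totalRate_uniform _ _ pathVia_injective, Fintype.card_fin, div_eq_mul_inv]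
  · have hcard : (Nat.card {i // e ∈ pathVia i} : ℝ) ≤ (m : ℝ) - 1 := by
      have := card_mem_pathVia_le hm e
      rw [Nat.le_sub_iff_add_le (by omega)] at this
      rw [le_sub_iff_add_le]
      exact_mod_cast this
    rw [PathFlow.edgeRate_uniform _ _ pathVia_injective]
    calc _ ≤ ((m : ℝ) - 1) * ((m : ℝ) - 1)⁻¹ := by gcongr
      _ = (Gpart m a).cap e := by simp [Gpart, ne_of_gt (sub_pos.2 hm')]
  · simp only [PathFlow.maxDelay_uniform _ _ hc, pathDelay_pathVia]

theorem detour_mem_of_pathDelay_eq_zero (hm : 0 < m) (ha : 0 < a ⟨0, hm⟩) {p : List (GE m)}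
    (hp : (Gpart m a).IsPath (Sum.inl 0) (Sum.inl (Fin.last m)) p)
    (hd : (Gpart m a).pathDelay p = 0) : Sum.inr (Sum.inl ⟨0, hm⟩) ∈ p := by
  match p, hp with
  | [], hp =>
    have := congrArg Fin.val (Sum.inl_injective hp)
    simp at this
    omega
  | Sum.inl i :: _, ⟨hsrc, _⟩ =>
    simp only [Gpart, Sum.inl.injEq, Fin.ext_iff, Fin.val_castSucc, Fin.val_zero] at hsrc
    obtain rfl : i = ⟨0, hm⟩ := Fin.ext hsrc
    simp [Network.pathDelay, Gpart] at hd
    omega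
  | Sum.inr (Sum.inl i) :: _, ⟨hsrc, _⟩ =>
    simp only [Gpart, Sum.inl.injEq, Fin.ext_iff, Fin.val_castSucc, Fin.val_zero] at hsrc
    obtain rfl : i = ⟨0, hm⟩ := Fin.ext hsrc
    exact List.mem_cons_self
  | Sum.inr (Sum.inr _) :: _, ⟨hsrc, _⟩ => nomatch hsrc

theorem exists_pathDelay_pos (hm : 0 < m) (ha : 0 < a ⟨0, hm⟩) {R : ℝ} (hR : 1 < R)
    (F : PathFlow (Gpart m a) (Sum.inl 0) (Sum.inl (Fin.last m))) (hF : F.Feasible R) :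
    ∃ p ∈ F.f.support, 0 < (Gpart m a).pathDelay p := by
  by_contra! hzero
  have hmem : ∀ p ∈ F.f.support, Sum.inr (Sum.inl ⟨0, hm⟩) ∈ p := fun p hp =>
    detour_mem_of_pathDelay_eq_zero a hm ha (F.isPath p hp) (Nat.le_zero.1 (hzero p hp))
  have hcap := hF.2 (Sum.inr (Sum.inl ⟨0, hm⟩))
  rw [F.edgeRate_eq_totalRate_of_forall_mem hmem, hF.1] at hcap
  simp only [Gpart, Nat.cast_one] at hcap
  linarith

end Gpart

/-- **Lemma 3.** For `n ≥ 3`, the minimum over all feasible (fractional) flows of rate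
`R = (n-1)/(n-2)` from `a_1` to `a_n` in `B_n` of the maximum delay `D(f)` equals `1`.
In particular, every feasible flow of this rate has a flow-carrying path of delay
at least `1`. -/
theorem bblock_min_max_delay (n : ℕ) (hn : 3 ≤ n) :
    IsLeast {D : ℕ | ∃ F : PathFlow (Bblock n) (BblockSrc n) (BblockSink n),
        F.Feasible (((n : ℝ) - 1) / ((n : ℝ) - 2)) ∧ F.maxDelay = D} 1 ∧
    (∀ F : PathFlow (Bblock n) (BblockSrc n) (BblockSink n),
      F.Feasible (((n : ℝ) - 1) / ((n : ℝ) - 2)) →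
      ∃ p ∈ F.f.support, 1 ≤ (Bblock n).pathDelay p) := by
  have hm : 2 ≤ n - 1 := by omega
  have hR : ((n : ℝ) - 1) / ((n : ℝ) - 2) = ((n - 1 : ℕ) : ℝ) / (((n - 1 : ℕ) : ℝ) - 1) := by
    rw [Nat.cast_sub (by omega)]
    ring_nf
  have hR1 : 1 < ((n : ℝ) - 1) / ((n : ℝ) - 2) := by
    have : (3 : ℝ) ≤ n := by exact_mod_cast hn
    rw [one_lt_div (by linarith)]
    linarith
  have delay_pos (F : PathFlow (Bblock n) (BblockSrc n) (BblockSink n))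
      (hF : F.Feasible (((n : ℝ) - 1) / ((n : ℝ) - 2))) :
      ∃ p ∈ F.f.support, 1 ≤ (Bblock n).pathDelay p :=
    Gpart.exists_pathDelay_pos _ (by omega) one_pos hR1 F hF
  refine ⟨⟨?_, ?_⟩, delay_pos⟩
  · obtain ⟨F, hF, hD⟩ := Gpart.exists_feasible_maxDelay_eq_sup (fun _ => 1) hm
    exact ⟨F, hR ▸ hF, hD.trans (Finset.sup_const ⟨⟨0, by omega⟩, Finset.mem_univ _⟩ 1)⟩
  · rintro D ⟨F, hF, rfl⟩
    obtain ⟨p, hp, hd⟩ := delay_pos F hF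
    exact hd.trans (Finset.le_sup hp)
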